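/- arXiv:2210.12920 — 2 statements merged into one kernel-verified Lean document; each statement's English description precedes it below -/
import Mathlib

section
/- If the per-user power splitting ratios satisfy α_k ≥ (2^R − 1)/S · 2^{R(K−k)} for each k ∈ [K] (with S > 0 the SNR and R > 0 the target rate), then summing these lower bounds yields Σ_{k=1}^K α_k ≥ (2^{RK} − 1)/S; consequently a power allocation with Σ α_k = 1 satisfying all these constraints exists if and only if K ≤ log₂(S+1)/R. -/
/-!
Write `q = 2 ^ R`. The lower bounds `(q - 1) / S * q ^ (K - 1 - k)` form a geometric series with
sum `(q ^ K - 1) / S`. Under the SINR constraints, the interference-plus-noise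
`T k = ∑_{i ≥ k} α i + 1 / S` seen by user `k` satisfies `T k = α k + T (k + 1) ≥ q * T (k + 1)`,
hence `1 + 1 / S = T 0 ≥ q ^ K * T K = q ^ K / S`. Conversely, if `q ^ K ≤ S + 1`, the allocation
making every constraint tight uses power `(q ^ K - 1) / S ≤ 1`, and the leftover power can go to the
first user, whose power is interference to nobody. Finally `q ^ K ≤ S + 1` is
`K ≤ log₂ (S + 1) / R`.
-/

open Finset

theorem sum_Ico_pow_reflect {R : Type*} [Semiring R] (q : R) (m K : ℕ) :
    ∑ j ∈ Ico m K, q ^ (K - 1 - j) = ∑ i ∈ range (K - m), q ^ i := by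
  rw [sum_Ico_eq_sum_range, ← sum_range_reflect (fun i => q ^ i)]
  refine sum_congr rfl fun i hi => ?_
  rw [mem_range] at hi
  congr 1
  omega

section Allocation

variable {R : Type*} [CommRing R]

theorem sum_Ico_geometric_allocation (q ν : R) (m K : ℕ) :
    ∑ j ∈ Ico m K, (q - 1) * ν * q ^ (K - 1 - j) = ν * (q ^ (K - m) - 1) := by
  rw [← mul_sum, sum_Ico_pow_reflect, ← geom_sum_mul]
  ring

def slackAllocation (q ν s : R) (K j : ℕ) : R :=
  (q - 1) * ν * q ^ (K - 1 - j) + if j = 0 then s else 0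

theorem sum_range_slackAllocation (q ν s : R) {K : ℕ} (hK : 0 < K) :
    ∑ j ∈ range K, slackAllocation q ν s K j = ν * (q ^ K - 1) + s := by
  simp only [slackAllocation]
  rw [sum_add_distrib, sum_ite_eq', if_pos (mem_range.2 hK), range_eq_Ico,
    sum_Ico_geometric_allocation, Nat.sub_zero]

end Allocation

section Ordered

variable {𝕜 : Type*} [CommRing 𝕜] [LinearOrder 𝕜] [IsStrictOrderedRing 𝕜]

theorem pow_mul_le_of_forall_mul_le {q : 𝕜} (hq : 0 ≤ q) :
    ∀ {T : ℕ → 𝕜} {n : ℕ}, (∀ k < n, q * T (k + 1) ≤ T k) → q ^ n * T n ≤ T 0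
  | T, 0, _ => by simp
  | T, n + 1, h =>
    calc q ^ (n + 1) * T (n + 1) = q * (q ^ n * T (n + 1)) := by ring
      _ ≤ q * T 1 :=
        mul_le_mul_of_nonneg_left
          (pow_mul_le_of_forall_mul_le hq (T := fun k => T (k + 1)) fun k hk => h (k + 1) (by omega))
          hq
      _ ≤ T 0 := h 0 (by omega)

theorem pow_mul_le_sum_add_of_sinr {q ν : 𝕜} (hq : 1 ≤ q) {a : ℕ → 𝕜} {K : ℕ}
    (h : ∀ k < K, (q - 1) * (∑ j ∈ Ico (k + 1) K, a j + ν) ≤ a k) :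
    q ^ K * ν ≤ ∑ j ∈ range K, a j + ν := by
  have step : ∀ k < K, q * (∑ j ∈ Ico (k + 1) K, a j + ν) ≤ ∑ j ∈ Ico k K, a j + ν := by
    intro k hk
    rw [sum_eq_sum_Ico_succ_bot hk]
    linarith [h k hk]
  simpa using pow_mul_le_of_forall_mul_le (by linarith) (T := fun m => ∑ j ∈ Ico m K, a j + ν) step

theorem slackAllocation_nonneg {q ν s : 𝕜} (hq : 1 ≤ q) (hν : 0 ≤ ν) (hs : 0 ≤ s) (K j : ℕ) :
    0 ≤ slackAllocation q ν s K j := by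
  have : 0 ≤ q - 1 := by linarith
  unfold slackAllocation
  split_ifs <;> positivity

theorem slackAllocation_sinr {q ν s : 𝕜} (hs : 0 ≤ s) {K k : ℕ} (hk : k < K) :
    (q - 1) * (∑ j ∈ Ico (k + 1) K, slackAllocation q ν s K j + ν) ≤ slackAllocation q ν s K k := by
  have tail : ∑ j ∈ Ico (k + 1) K, slackAllocation q ν s K j
      = ∑ j ∈ Ico (k + 1) K, (q - 1) * ν * q ^ (K - 1 - j) :=
    sum_congr rfl fun j hj => by
      rw [slackAllocation, if_neg (by rw [mem_Ico] at hj; omega), add_zero]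
  rw [tail, sum_Ico_geometric_allocation, slackAllocation, show K - (k + 1) = K - 1 - k by omega]
  have : 0 ≤ if k = 0 then s else 0 := by split_ifs <;> simp [hs]
  linarith

end Ordered

theorem sum_filter_fin_lt {M : Type*} [AddCommMonoid M] (a : ℕ → M) {K : ℕ} (k : Fin K) :
    ∑ i ∈ univ.filter (fun i => k < i), a i = ∑ j ∈ Ico ((k : ℕ) + 1) K, a j := by
  rw [filter_lt_eq_Ioi, Ico_add_one_left_eq_Ioo, ← Fin.map_valEmbedding_Ioi, sum_map]
  rfl

theorem sinr_constraints_iff {S q : ℝ} (hS : 0 < S) {K : ℕ} (hK : 1 ≤ K) {a : ℕ → ℝ}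
    (ha : ∀ j < K, 0 ≤ a j) :
    ((∀ k : Fin K, (k : ℕ) < K - 1 →
        a k / ((∑ i ∈ univ.filter (fun i => k < i), a i) + 1 / S) ≥ q - 1) ∧
      a (K - 1) * S ≥ q - 1) ↔
    ∀ k < K, (q - 1) * (∑ j ∈ Ico (k + 1) K, a j + 1 / S) ≤ a k := by
  have hden : ∀ k, 0 < ∑ j ∈ Ico (k + 1) K, a j + 1 / S := fun k =>
    add_pos_of_nonneg_of_pos (sum_nonneg fun j hj => ha j (mem_Ico.1 hj).2) (by positivity)
  have last_iff :
      (q - 1) * (∑ j ∈ Ico (K - 1 + 1) K, a j + 1 / S) ≤ a (K - 1) ↔ a (K - 1) * S ≥ q - 1 := by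
    rw [Nat.sub_add_cancel hK, Ico_self, sum_empty, zero_add, mul_one_div, div_le_iff₀ hS]
  simp only [sum_filter_fin_lt, ge_iff_le, le_div_iff₀ (hden _), ← last_iff]
  constructor
  · rintro ⟨hsinr, hlast⟩ k hk
    rcases Nat.lt_or_ge k (K - 1) with hk' | hk'
    · exact hsinr ⟨k, hk⟩ hk'
    · rwa [show k = K - 1 by omega]
  · intro h
    exact ⟨fun k hk => h k k.isLt, h (K - 1) (by omega)⟩

theorem exists_sinr_allocation {S q : ℝ} (hS : 0 < S) (hq : 1 ≤ q) {K : ℕ} (hK : 0 < K)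
    (hle : q ^ K ≤ S + 1) :
    ∃ a : ℕ → ℝ, (∀ j, 0 ≤ a j) ∧ ∑ j ∈ range K, a j = 1 ∧
      ∀ k < K, (q - 1) * (∑ j ∈ Ico (k + 1) K, a j + 1 / S) ≤ a k := by
  have hs : 0 ≤ 1 - (q ^ K - 1) / S := by
    rw [sub_nonneg, div_le_one hS]
    linarith
  refine ⟨slackAllocation q (1 / S) (1 - (q ^ K - 1) / S) K,
    slackAllocation_nonneg hq (by positivity) hs K, ?_, fun k hk => slackAllocation_sinr hs hk⟩
  rw [sum_range_slackAllocation _ _ _ hK]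
  ring

theorem geometric_lower_bound_le_sum {S q : ℝ} {K : ℕ} {α : Fin K → ℝ}
    (hα : ∀ k : Fin K, (q - 1) / S * q ^ (K - 1 - (k : ℕ)) ≤ α k) :
    (q ^ K - 1) / S ≤ ∑ k, α k :=
  calc (q ^ K - 1) / S = ∑ k : Fin K, (q - 1) / S * q ^ (K - 1 - (k : ℕ)) := by
        rw [← mul_sum, Fin.sum_univ_eq_sum_range (fun j => q ^ (K - 1 - j)),
          sum_range_reflect (fun j => q ^ j), ← geom_sum_mul]
        ring
    _ ≤ ∑ k, α k := sum_le_sum fun k _ => hα k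

theorem natCast_le_logb_div_iff {b y R : ℝ} (hb : 1 < b) (hy : 0 < y) (hR : 0 < R) (K : ℕ) :
    (K : ℝ) ≤ Real.logb b y / R ↔ (b ^ R) ^ K ≤ y := by
  rw [le_div_iff₀ hR, ← Real.rpow_mul_natCast (by linarith), mul_comm R,
    Real.le_logb_iff_rpow_le hb hy]

/-- lower bounds on the power-splitting ratios sum to `(2^(R*K) - 1)/S`,
and a feasible power allocation exists iff `K ≤ log₂(S+1)/R`. -/
theorem power_allocation_feasibility (S R : ℝ) (hS : 0 < S) (hR : 0 < R)
    (K : ℕ) (hK : 1 ≤ K) :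
    (∀ α : Fin K → ℝ,
      (∀ k : Fin K, α k ≥ (2 ^ R - 1) / S * 2 ^ (R * ((K : ℝ) - 1 - (k : ℕ)))) →
      ∑ k, α k ≥ (2 ^ (R * K) - 1) / S) ∧
    ((∃ α : Fin K → ℝ,
        (∀ k, α k ∈ Set.Icc (0 : ℝ) 1) ∧ (∑ k, α k = 1) ∧
        (∀ k : Fin K, (k : ℕ) < K - 1 →
          α k / ((∑ i ∈ univ.filter (fun i => k < i), α i) + 1 / S) ≥ 2 ^ R - 1) ∧
        α ⟨K - 1, by omega⟩ * S ≥ 2 ^ R - 1) ↔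
      (K : ℝ) ≤ Real.logb 2 (S + 1) / R) := by
  have hq : 1 ≤ (2 : ℝ) ^ R := Real.one_le_rpow (by norm_num) hR.le
  have two_rpow : ∀ n : ℕ, (2 : ℝ) ^ (R * n) = ((2 : ℝ) ^ R) ^ n :=
    Real.rpow_mul_natCast (by norm_num) R
  refine ⟨fun α hα => ?_, ?_⟩
  · rw [ge_iff_le, two_rpow]
    refine geometric_lower_bound_le_sum fun k => ?_
    have hk : ((K - 1 - k : ℕ) : ℝ) = K - 1 - k := by
      rw [Nat.cast_sub (by omega), Nat.cast_sub hK, Nat.cast_one]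
    rw [← two_rpow, hk]
    exact hα k
  rw [natCast_le_logb_div_iff one_lt_two (by positivity) hR]
  constructor
  · rintro ⟨α, hα, hsum, hsinr⟩
    obtain ⟨a, rfl⟩ : ∃ a : ℕ → ℝ, α = fun i : Fin K => a i :=
      ⟨fun j => if h : j < K then α ⟨j, h⟩ else 0, by funext i; simp⟩
    have key := pow_mul_le_sum_add_of_sinr hq
      ((sinr_constraints_iff hS hK fun j hj => (hα ⟨j, hj⟩).1).1 hsinr)
    rw [← Fin.sum_univ_eq_sum_range, hsum, mul_one_div, div_le_iff₀ hS, add_mul,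
      one_div_mul_cancel hS.ne', one_mul] at key
    linarith
  · intro hle
    obtain ⟨a, ha, hsum, hsinr⟩ := exists_sinr_allocation hS hq hK hle
    rw [← Fin.sum_univ_eq_sum_range] at hsum
    exact ⟨fun k => a k, fun k => ⟨ha k, hsum ▸ single_le_sum (f := fun i : Fin K => a i)
      (fun i _ => ha i) (mem_univ k)⟩, hsum, (sinr_constraints_iff hS hK fun j _ => ha j).2 hsinr⟩
end

section
/- Let X_1,…,X_K be independent exponential random variables with rates λ_1,…,λ_K > 0 and let γ > 0. Define A_1 = 1, B_1 = λ_1, and for k ∈ [2, K−1], A_k = λ_k A_{k−1}/(γ B_{k−1} + λ_k), B_k = (1+γ)B_{k−1} + λ_k. Then P(X_j ≥ γ(Σ_{i=j+1}^K X_i + 1) for all j ∈ [K−1] and X_K ≥ γ) = (λ_K A_{K−1}/(γ B_{K−1} + λ_K)) · e^{−γ((1+γ)B_{K−1} + λ_K)}. -/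
/-
Peel off the first user. Given `S = X_2 + ⋯ + X_K`, the constraints on `X_2, …, X_K` are the
same event for `K - 1` users, and the remaining one is `X_1 ≥ γ (S + 1)`. Integrating
`X_1 ~ Exp(λ)` against a weight `e^{-a (X_1 + S + 1)}` over that tail gives
`λ / (a + λ) · e^{-(a + γ (a + λ)) (S + 1)}`, a weight of the same shape. Starting from `a = 0`,
after `k` users the rate is `γ B_k` and the accumulated factor is `A_k`, so the probability is
`A_K e^{-γ B_K}`.
-/

open MeasureTheory ProbabilityTheory Finset

/-- The sequence `B_k`: `B_1 = λ_1`, `B_{k+1} = (1+γ)B_k + λ_{k+1}` (with `B_0 = 0`). -/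
noncomputable def Bseq (γ : ℝ) (l : ℕ → ℝ) : ℕ → ℝ
  | 0 => 0
  | k + 1 => (1 + γ) * Bseq γ l k + l (k + 1)

/-- The sequence `A_k`: `A_1 = 1`, `A_{k+1} = λ_{k+1} A_k / (γ B_k + λ_{k+1})`
(with `A_0 = 1`). -/
noncomputable def Aseq (γ : ℝ) (l : ℕ → ℝ) : ℕ → ℝ
  | 0 => 1
  | k + 1 => l (k + 1) * Aseq γ l k / (γ * Bseq γ l k + l (k + 1))

open Real
open scoped ENNReal

theorem lintegral_pi_fin_succ {n : ℕ} {α : Type*} [MeasurableSpace α]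
    (μ : Fin (n + 1) → Measure α) [∀ i, SigmaFinite (μ i)] {f : (Fin (n + 1) → α) → ℝ≥0∞}
    (hf : Measurable f) :
    ∫⁻ x, f x ∂Measure.pi μ =
      ∫⁻ z, ∫⁻ y, f (Fin.cons y z) ∂μ 0 ∂Measure.pi fun i => μ i.succ := by
  have hsplit := (measurePreserving_piFinSuccAbove μ 0).symm
  rw [← hsplit.lintegral_comp_emb (MeasurableEquiv.measurableEmbedding _)]
  refine (lintegral_prod_symm' _ (hf.comp (MeasurableEquiv.measurable _))).trans ?_
  simp only [Fin.zero_succAbove, MeasurableEquiv.piFinSuccAbove_symm_apply,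
    Fin.insertNthEquiv_zero, Function.comp_apply]
  rfl

theorem lintegral_Ici_exp_neg_mul_expMeasure {r a t : ℝ} (hr : 0 < r) (ha : 0 < a + r)
    (ht : 0 ≤ t) :
    ∫⁻ y in Set.Ici t, ENNReal.ofReal (exp (-(a * y))) ∂expMeasure r =
      ENNReal.ofReal (r / (a + r) * exp (-((a + r) * t))) := by
  have hpdf : Measurable (exponentialPDF r) :=
    (measurable_exponentialPDFReal r).ennreal_ofReal
  have hint : IntegrableOn (fun y => r * exp (-(a + r) * y)) (Set.Ici t) :=
    ((integrableOn_Ici_iff_integrableOn_Ioi).2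
      (integrableOn_exp_mul_Ioi (by linarith) t)).const_mul r
  rw [show expMeasure r = volume.withDensity (exponentialPDF r) from rfl,
    setLIntegral_withDensity_eq_setLIntegral_mul _ hpdf (by fun_prop) measurableSet_Ici]
  calc _ = ∫⁻ y in Set.Ici t, ENNReal.ofReal (r * exp (-(a + r) * y)) := by
          refine setLIntegral_congr_fun measurableSet_Ici fun y hy => ?_
          rw [Pi.mul_apply, exponentialPDF_of_nonneg (ht.trans hy), ← ENNReal.ofReal_mul
            (by positivity), mul_assoc, ← exp_add]
          ring_nf
    _ = _ := by
      rw [← ofReal_integral_eq_lintegral_ofReal hint (.of_forall fun y => by positivity),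
        integral_const_mul, integral_Ici_eq_integral_Ioi, integral_exp_mul_Ioi (by linarith)]
      congr 1
      field_simp

theorem Bseq_nonneg {γ : ℝ} {l : ℕ → ℝ} (hγ : 0 ≤ γ) (hl : ∀ k, 0 ≤ l k) :
    ∀ k, 0 ≤ Bseq γ l k
  | 0 => le_rfl
  | k + 1 => by
    have := Bseq_nonneg hγ hl k
    have := hl (k + 1)
    rw [Bseq]; positivity

theorem Aseq_nonneg {γ : ℝ} {l : ℕ → ℝ} (hγ : 0 ≤ γ) (hl : ∀ k, 0 ≤ l k) :
    ∀ k, 0 ≤ Aseq γ l k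
  | 0 => zero_le_one
  | k + 1 => by
    have := Aseq_nonneg hγ hl k
    have := Bseq_nonneg hγ hl k
    have := hl (k + 1)
    rw [Aseq]; positivity

/- The last user's condition `x (n - 1) ≥ γ` is the `j = n - 1` instance, whose tail sum is
empty. -/
def sicSuccess (γ : ℝ) (n : ℕ) : Set (Fin n → ℝ) :=
  {x | ∀ j, γ * ((∑ i ∈ univ.filter (fun i => j < i), x i) + 1) ≤ x j}

theorem cons_mem_sicSuccess_iff {γ y : ℝ} {n : ℕ} {z : Fin n → ℝ} :
    Fin.cons y z ∈ sicSuccess γ (n + 1) ↔ γ * ((∑ i, z i) + 1) ≤ y ∧ z ∈ sicSuccess γ n := by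
  simp [sicSuccess, Fin.forall_fin_succ, Finset.sum_filter, Fin.sum_univ_succ, Fin.succ_pos,
    Fin.succ_lt_succ_iff]

theorem measurableSet_sicSuccess (γ : ℝ) (n : ℕ) : MeasurableSet (sicSuccess γ n) := by
  rw [sicSuccess, Set.ofPred_forall]
  exact .iInter fun j => measurableSet_le (by fun_prop) (measurable_pi_apply j)

theorem sum_nonneg_of_mem_sicSuccess {γ : ℝ} (hγ : 0 ≤ γ) :
    ∀ {n : ℕ} {x : Fin n → ℝ}, x ∈ sicSuccess γ n → 0 ≤ ∑ i, x i
  | 0, _, _ => by simp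
  | n + 1, x, hx => by
    induction x using Fin.consCases with
    | cons y z =>
      obtain ⟨hy, hz⟩ := cons_mem_sicSuccess_iff.1 hx
      have hz' := sum_nonneg_of_mem_sicSuccess hγ hz
      rw [Fin.sum_cons]
      nlinarith

theorem lintegral_indicator_sicSuccess_cons {γ r a : ℝ} (hγ : 0 ≤ γ) (hr : 0 < r) (ha : 0 ≤ a)
    {n : ℕ} (z : Fin n → ℝ) :
    ∫⁻ y, (sicSuccess γ (n + 1)).indicator
        (fun x => ENNReal.ofReal (exp (-(a * ((∑ i, x i) + 1))))) (Fin.cons y z) ∂expMeasure r =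
      (sicSuccess γ n).indicator (fun z => ENNReal.ofReal
        (r / (a + r) * exp (-((a + γ * (a + r)) * ((∑ i, z i) + 1))))) z := by
  by_cases hz : z ∈ sicSuccess γ n
  · set s := (∑ i, z i) + 1 with hs_def
    have hs : 0 ≤ s := by linarith [sum_nonneg_of_mem_sicSuccess hγ hz]
    have hcons : ∀ y, (sicSuccess γ (n + 1)).indicator
        (fun x => ENNReal.ofReal (exp (-(a * ((∑ i, x i) + 1))))) (Fin.cons y z) =
        (Set.Ici (γ * s)).indicator
          (fun y => ENNReal.ofReal (exp (-(a * s))) * ENNReal.ofReal (exp (-(a * y)))) y := by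
      intro y
      simp only [Set.indicator, cons_mem_sicSuccess_iff, hz, and_true, Set.mem_Ici, Fin.sum_cons]
      split_ifs
      · rw [← ENNReal.ofReal_mul (exp_nonneg _), ← exp_add, hs_def]
        ring_nf
      · rfl
    rw [lintegral_congr hcons, lintegral_indicator measurableSet_Ici,
      lintegral_const_mul' _ _ ENNReal.ofReal_ne_top,
      lintegral_Ici_exp_neg_mul_expMeasure hr (by linarith) (mul_nonneg hγ hs),
      ← ENNReal.ofReal_mul (exp_nonneg _), Set.indicator_of_mem hz]
    congr 1
    rw [mul_left_comm, ← exp_add, hs_def]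
    ring_nf
  · simp [Set.indicator, cons_mem_sicSuccess_iff, hz]

theorem ofReal_Aseq_mul_lintegral_sicSuccess {γ : ℝ} {l : ℕ → ℝ} (hγ : 0 ≤ γ)
    (hl : ∀ k, 0 < l k) : ∀ n k : ℕ,
    ENNReal.ofReal (Aseq γ l k) *
        ∫⁻ x in sicSuccess γ n, ENNReal.ofReal (exp (-(γ * Bseq γ l k * ((∑ i, x i) + 1))))
          ∂Measure.pi (fun i : Fin n => expMeasure (l (k + i + 1))) =
      ENNReal.ofReal (Aseq γ l (k + n) * exp (-(γ * Bseq γ l (k + n))))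
  | 0, k => by
    simp [sicSuccess, ← ENNReal.ofReal_mul (Aseq_nonneg hγ (fun k => (hl k).le) k)]
  | n + 1, k => by
    have hl' : ∀ k, 0 ≤ l k := fun k => (hl k).le
    have : ∀ i, SigmaFinite (expMeasure (l i)) := fun i =>
      have := isProbabilityMeasure_expMeasure (hl i); inferInstance
    have hB : 0 ≤ γ * Bseq γ l k := mul_nonneg hγ (Bseq_nonneg hγ hl' k)
    have hfamily : (fun i : Fin n => expMeasure (l (k + (i.succ : ℕ) + 1))) =
        fun i : Fin n => expMeasure (l (k + 1 + i + 1)) := by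
      ext1 i; rw [Fin.val_succ]; congr 2; omega
    have hrate : γ * Bseq γ l k + γ * (γ * Bseq γ l k + l (k + 1)) = γ * Bseq γ l (k + 1) := by
      rw [Bseq]; ring
    rw [← lintegral_indicator (measurableSet_sicSuccess γ _),
      lintegral_pi_fin_succ _
        ((by fun_prop : Measurable _).indicator (measurableSet_sicSuccess γ _))]
    simp only [Fin.val_zero, add_zero]
    rw [lintegral_congr fun z => lintegral_indicator_sicSuccess_cons hγ (hl (k + 1)) hB z,
      lintegral_indicator (measurableSet_sicSuccess γ _), hfamily, hrate]
    have hA : Aseq γ l k * (l (k + 1) / (γ * Bseq γ l k + l (k + 1))) = Aseq γ l (k + 1) := by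
      rw [Aseq]; ring
    simp_rw [ENNReal.ofReal_mul (div_nonneg (hl' _) (add_nonneg hB (hl' _)))]
    rw [lintegral_const_mul' _ _ ENNReal.ofReal_ne_top, ← mul_assoc,
      ← ENNReal.ofReal_mul (Aseq_nonneg hγ hl' k), hA,
      ofReal_Aseq_mul_lintegral_sicSuccess hγ hl n, add_right_comm, add_assoc]

theorem pi_expMeasure_sicSuccess {γ : ℝ} {l : ℕ → ℝ} (hγ : 0 ≤ γ) (hl : ∀ k, 0 < l k)
    (n : ℕ) :
    Measure.pi (fun i : Fin n => expMeasure (l (i + 1))) (sicSuccess γ n) =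
      ENNReal.ofReal (Aseq γ l n * exp (-(γ * Bseq γ l n))) := by
  simpa [Aseq, Bseq] using ofReal_Aseq_mul_lintegral_sicSuccess hγ hl n 0

theorem sicSuccess_eq_setOf {γ : ℝ} {K : ℕ} (hK : K - 1 < K) :
    sicSuccess γ K = {x | (∀ j : Fin K, (j : ℕ) + 1 ≤ K - 1 →
        x j ≥ γ * ((∑ i ∈ univ.filter (fun i => j < i), x i) + 1)) ∧ x ⟨K - 1, hK⟩ ≥ γ} := by
  have hlast : ∀ x : Fin K → ℝ, ∑ i ∈ univ.filter (fun i => (⟨K - 1, hK⟩ : Fin K) < i), x i = 0 :=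
    fun x => sum_eq_zero fun i hi =>
      absurd (mem_filter.1 hi).2 (by rw [Fin.lt_def, Fin.val_mk]; omega)
  ext x
  refine ⟨fun hx => ⟨fun j _ => hx j, by simpa [hlast] using hx ⟨K - 1, hK⟩⟩, ?_⟩
  rintro ⟨hx, hxlast⟩ j
  by_cases hj : (j : ℕ) + 1 ≤ K - 1
  · exact hx j hj
  · obtain rfl : j = ⟨K - 1, hK⟩ := Fin.ext (by have := j.isLt; dsimp only; omega)
    simpa [hlast] using hxlast

/-- the joint non-outage probability of `K` independent exponential SNRs
under successive cancellation decoding has the stated closed form. -/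
theorem joint_nonoutage_prob (K : ℕ) (hK : 2 ≤ K) (l : ℕ → ℝ)
    (hl : ∀ k, 0 < l k) (γ : ℝ) (hγ : 0 < γ) :
    (Measure.pi fun i : Fin K => expMeasure (l ((i : ℕ) + 1)))
        {x | (∀ j : Fin K, (j : ℕ) + 1 ≤ K - 1 →
            x j ≥ γ * ((∑ i ∈ univ.filter (fun i => j < i), x i) + 1)) ∧
          x ⟨K - 1, by omega⟩ ≥ γ} =
      ENNReal.ofReal
        (l K * Aseq γ l (K - 1) / (γ * Bseq γ l (K - 1) + l K) *
          Real.exp (-γ * ((1 + γ) * Bseq γ l (K - 1) + l K))) := by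
  rw [← sicSuccess_eq_setOf, pi_expMeasure_sicSuccess hγ.le hl]
  obtain ⟨m, rfl⟩ : ∃ m, K = m + 1 := ⟨K - 1, by omega⟩
  rw [Nat.add_sub_cancel, Aseq, Bseq, neg_mul]
end
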